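/- Let $R$ be a commutative ring, and let $*$ be a second (quantum) product on $R[q_2]$ such that for all classes $\gamma$, $\gamma * h = \gamma h + \sum_{b\geq 1} E_b(\gamma) q_2^b$, where each correction operator $E_b$ is $R$-linear and vanishes on any class divisible by $(\xi-h)$. Then for all $l,s\geq 0$ with $\xi^{*l}*h^{*s}-\xi^{*(l+1)}*h^{*(s-1)}=\xi^l h^s-\xi^{l+1}h^{s-1}$, one has $\xi^{*(l+1)}*h^{*s}-\xi^{*l}*h^{*(s+1)}=\xi^{l+1}h^s-\xi^l h^{s+1}$. -/
import Mathlib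


/-- abstract inductive step for Lemma "induz".  `P l s` stands
for the quantum product `ξ^{*l} * h^{*s}`, the quantum multiplication by `h`
is `γ * h = γh + E(γ)` where the additive correction `E` kills every class
divisible by `ξ - h`.  If
`ξ^{*l}*h^{*(s+1)} - ξ^{*(l+1)}*h^{*s} = ξ^l h^{s+1} - ξ^{l+1} h^s`, then
`ξ^{*(l+1)}*h^{*(s+1)} - ξ^{*l}*h^{*(s+2)} = ξ^{l+1} h^{s+1} - ξ^l h^{s+2}`. -/
theorem stmt8 {A : Type*} [CommRing A] (ξ h : A) (P : ℕ → ℕ → A) (E : A →+ A)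
    (hE : ∀ γ : A, E ((ξ - h) * γ) = 0)
    (hstar : ∀ l s, P l (s + 1) = P l s * h + E (P l s))
    (l s : ℕ)
    (hyp : P l (s + 1) - P (l + 1) s = ξ ^ l * h ^ (s + 1) - ξ ^ (l + 1) * h ^ s) :
    P (l + 1) (s + 1) - P l (s + 2)
      = ξ ^ (l + 1) * h ^ (s + 1) - ξ ^ l * h ^ (s + 2) := by
  have hdiff : P (l + 1) s - P l (s + 1) = (ξ - h) * (ξ ^ l * h ^ s) := by
    rw [pow_succ, pow_succ] at hyp
    linear_combination -hyp
  have hEzero : E (P (l + 1) s) - E (P l (s + 1)) = 0 := by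
    rw [← map_sub, hdiff, hE]
  rw [hstar (l + 1) s, hstar l (s + 1)]
  have hm : P (l + 1) s * h - P l (s + 1) * h = (ξ - h) * (ξ ^ l * h ^ s) * h := by
    rw [← sub_mul, hdiff]
  linear_combination hm + hEzero
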